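/- In the game saliquant, there are infinitely many positive integers n such that SG(n) = (n − 2)/4, i.e., such that 4·SG(n) = n − 2. -/

import Mathlib

/-- Sprague–Grundy values for the game saliquant: the options of a position `n`
are the positions `n - k` where `1 ≤ k ≤ n` and `k` does not divide `n`, and
`sg n` is the least nonnegative integer not among the values of the options. -/
noncomputable def sg : ℕ → ℕ
  | n => sInf {m : ℕ | ∀ k, 1 ≤ k → k ≤ n → ¬ k ∣ n → sg (n - k) ≠ m}
decreasing_by omega

lemma sg_def' (n : ℕ) :
    sg n = sInf {m : ℕ | ∀ k, 1 ≤ k → k ≤ n → ¬ k ∣ n → sg (n - k) ≠ m} := by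
  rw [sg]

lemma sg_le_of_mem {n m : ℕ}
    (h : ∀ k, 1 ≤ k → k ≤ n → ¬ k ∣ n → sg (n - k) ≠ m) : sg n ≤ m := by
  rw [sg_def']
  exact Nat.sInf_le h

lemma sg_le_self (n : ℕ) : sg n ≤ n := by
  induction n using Nat.strong_induction_on with
  | _ n ih =>
    apply sg_le_of_mem
    intro k hk1 hkn _
    have hlt : n - k < n := by omega
    have := ih _ hlt
    omega

lemma sg_spec (n : ℕ) : ∀ k, 1 ≤ k → k ≤ n → ¬ k ∣ n → sg (n - k) ≠ sg n := by
  have hne : {m : ℕ | ∀ k, 1 ≤ k → k ≤ n → ¬ k ∣ n → sg (n - k) ≠ m}.Nonempty := by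
    refine ⟨n, fun k hk1 hkn _ => ?_⟩
    have := sg_le_self (n - k)
    omega
  have h := Nat.sInf_mem hne
  rw [← sg_def'] at h
  exact h

lemma sg_eq_of {n v : ℕ}
    (hmem : ∀ k, 1 ≤ k → k ≤ n → ¬ k ∣ n → sg (n - k) ≠ v)
    (hlt : ∀ w, w < v → ∃ k, 1 ≤ k ∧ k ≤ n ∧ ¬ k ∣ n ∧ sg (n - k) = w) :
    sg n = v := by
  have h1 : sg n ≤ v := sg_le_of_mem hmem
  rcases lt_or_eq_of_le h1 with h | h
  · obtain ⟨k, hk1, hk2, hk3, hk4⟩ := hlt _ h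
    exact absurd hk4 (sg_spec n k hk1 hk2 hk3)
  · exact h

/-- Joint structure theorem: odd positions have value `(n-1)/2`; even positions
have value `(n-d-1)/2` for some divisor `d` of `n`. -/
theorem sg_struct (n : ℕ) :
    (n % 2 = 1 → 2 * sg n + 1 = n) ∧
    (n % 2 = 0 → 0 < n → ∃ d, d ∣ n ∧ 2 * sg n + d + 1 = n) := by
  induction n using Nat.strong_induction_on with
  | _ n ih =>
    -- helper bounds from the induction hypothesis
    have hOddT : ∀ t, t < n → t % 2 = 1 → 2 * sg t + 1 = t := fun t ht h => (ih t ht).1 h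
    have hEvenT : ∀ t, t < n → t % 2 = 0 → 0 < t → 2 * sg t + 2 ≤ t := by
      intro t ht h hpos
      obtain ⟨d, hd, heq⟩ := (ih t ht).2 h hpos
      have hd0 : d ≠ 0 := by
        rintro rfl
        have := Nat.eq_zero_of_zero_dvd hd
        omega
      omega
    constructor
    · -- odd case
      intro hodd
      obtain ⟨v, hv⟩ : ∃ v, n = 2 * v + 1 := ⟨n / 2, by omega⟩
      have hsg : sg n = v := by
        apply sg_eq_of
        · intro k hk1 hkn hknd
          have hkne : k ≠ n := by
            rintro rfl
            exact hknd dvd_rfl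
          set t := n - k with ht
          have htk : t + k = n := by omega
          rcases Nat.even_or_odd t with he | ho
          · have het : t % 2 = 0 := Nat.even_iff.mp he
            have hpos : 0 < t := by omega
            have := hEvenT t (by omega) het hpos
            omega
          · have hot : t % 2 = 1 := Nat.odd_iff.mp ho
            have := hOddT t (by omega) hot
            intro hc
            -- then t = 2v+1 = n, so k = 0, contradiction
            omega
        · intro w hw
          refine ⟨n - (2 * w + 1), by omega, by omega, ?_, ?_⟩
          · intro hdvd
            have h2k : (2 : ℕ) ∣ (n - (2 * w + 1)) := by omega
            have h2n : (2 : ℕ) ∣ n := dvd_trans h2k hdvd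
            omega
          · have hrw : n - (n - (2 * w + 1)) = 2 * w + 1 := by omega
            rw [hrw]
            have := hOddT (2 * w + 1) (by omega) (by omega)
            omega
      omega
    · -- even case
      intro heven hpos
      obtain ⟨v1, hv1⟩ : ∃ v1, n = 2 * v1 + 2 := ⟨n / 2 - 1, by omega⟩
      have hub : sg n ≤ v1 := by
        apply sg_le_of_mem
        intro k hk1 hkn hknd
        have hkne : k ≠ n := by rintro rfl; exact hknd dvd_rfl
        have hkne1 : k ≠ 1 := by rintro rfl; exact hknd (one_dvd n)
        have hkne2 : k ≠ 2 := by
          rintro rfl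
          exact hknd (by omega)
        set t := n - k with ht
        have htk : t + k = n := by omega
        rcases Nat.even_or_odd t with he | ho
        · have het : t % 2 = 0 := Nat.even_iff.mp he
          have hpos' : 0 < t := by omega
          have := hEvenT t (by omega) het hpos'
          omega
        · have hot : t % 2 = 1 := Nat.odd_iff.mp ho
          have := hOddT t (by omega) hot
          -- sg t = v1 would force t = n - 1, k = 1
          omega
      -- now the chosen value determines a divisor
      have hd1 : 1 ≤ n - 2 * sg n - 1 := by omega
      by_cases hdvd : (n - 2 * sg n - 1) ∣ n
      · exact ⟨n - 2 * sg n - 1, hdvd, by omega⟩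
      · exfalso
        have hspec := sg_spec n (n - 2 * sg n - 1) hd1 (by omega) hdvd
        have hrw : n - (n - 2 * sg n - 1) = 2 * sg n + 1 := by omega
        rw [hrw] at hspec
        have := hOddT (2 * sg n + 1) (by omega) (by omega)
        omega

lemma sg_odd {n : ℕ} (h : n % 2 = 1) : 2 * sg n + 1 = n := (sg_struct n).1 h

lemma sg_even_exists {n : ℕ} (h : n % 2 = 0) (hpos : 0 < n) :
    ∃ d, d ∣ n ∧ 2 * sg n + d + 1 = n := (sg_struct n).2 h hpos

lemma sg_even_le {n : ℕ} (h : n % 2 = 0) (hpos : 0 < n) : 2 * sg n + 2 ≤ n := by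
  obtain ⟨d, hd, heq⟩ := sg_even_exists h hpos
  have hd0 : d ≠ 0 := by
    rintro rfl
    have := Nat.eq_zero_of_zero_dvd hd
    omega
  omega

/-- If `n` is even and divisible by 3, then `sg n ≤ n/2 - 2`. -/
lemma sg_le_of_three {n : ℕ} (h2 : n % 2 = 0) (h3 : 3 ∣ n) (hpos : 0 < n) :
    2 * sg n + 4 ≤ n := by
  have hn6 : 6 ≤ n := by omega
  obtain ⟨v, hv⟩ : ∃ v, n = 2 * v + 4 := ⟨n / 2 - 2, by omega⟩
  have : sg n ≤ v := by
    apply sg_le_of_mem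
    intro k hk1 hkn hknd
    have hkne : k ≠ n := by rintro rfl; exact hknd dvd_rfl
    have hkne1 : k ≠ 1 := by rintro rfl; exact hknd (one_dvd n)
    have hkne2 : k ≠ 2 := by rintro rfl; exact hknd (by omega)
    have hkne3 : k ≠ 3 := by rintro rfl; exact hknd h3
    set t := n - k with ht
    have htk : t + k = n := by omega
    rcases Nat.even_or_odd t with he | ho
    · have het : t % 2 = 0 := Nat.even_iff.mp he
      have := sg_even_le het (by omega)
      omega
    · have hot : t % 2 = 1 := Nat.odd_iff.mp ho
      have := sg_odd hot
      -- sg t = v would force t = n - 3, k = 3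
      omega
  omega

/-- If `n` is even, divisible by 5 and `n ≡ 1 (mod 3)`, then `sg n ≤ n/2 - 3`. -/
lemma sg_le_of_five {n : ℕ} (h2 : n % 2 = 0) (h5 : 5 ∣ n) (h3 : n % 3 = 1)
    (hpos : 0 < n) : 2 * sg n + 6 ≤ n := by
  have hn10 : 10 ≤ n := by omega
  obtain ⟨v, hv⟩ : ∃ v, n = 2 * v + 6 := ⟨n / 2 - 3, by omega⟩
  have : sg n ≤ v := by
    apply sg_le_of_mem
    intro k hk1 hkn hknd
    have hkne : k ≠ n := by rintro rfl; exact hknd dvd_rfl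
    have hkne1 : k ≠ 1 := by rintro rfl; exact hknd (one_dvd n)
    have hkne2 : k ≠ 2 := by rintro rfl; exact hknd (by omega)
    have hkne5 : k ≠ 5 := by rintro rfl; exact hknd h5
    set t := n - k with ht
    have htk : t + k = n := by omega
    rcases Nat.even_or_odd t with he | ho
    · have het : t % 2 = 0 := Nat.even_iff.mp he
      have hgen := sg_even_le het (by omega)
      intro hc
      -- then t ≥ n - 4, and k even, k ∉ {2}, so k = 4 and t = n - 4
      have hk4 : k = 4 := by omega
      have h3t : 3 ∣ t := by omega
      have := sg_le_of_three het h3t (by omega)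
      omega
    · have hot : t % 2 = 1 := Nat.odd_iff.mp ho
      have := sg_odd hot
      omega
  omega

/-- If `n` is divisible by 8 and 9, then `sg n ≤ n/2 - 5`. -/
lemma sg_le_of_eight_nine {n : ℕ} (h8 : 8 ∣ n) (h9 : 9 ∣ n) (hpos : 0 < n) :
    2 * sg n + 10 ≤ n := by
  have hn72 : 72 ≤ n := by omega
  obtain ⟨v, hv⟩ : ∃ v, n = 2 * v + 10 := ⟨n / 2 - 5, by omega⟩
  have : sg n ≤ v := by
    apply sg_le_of_mem
    intro k hk1 hkn hknd
    have hkne : k ≠ n := by rintro rfl; exact hknd dvd_rfl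
    have hkne1 : k ≠ 1 := by rintro rfl; exact hknd (one_dvd n)
    have hkne2 : k ≠ 2 := by rintro rfl; exact hknd (by omega)
    have hkne4 : k ≠ 4 := by rintro rfl; exact hknd (by omega)
    have hkne6 : k ≠ 6 := by rintro rfl; exact hknd (by omega)
    have hkne8 : k ≠ 8 := by rintro rfl; exact hknd h8
    have hkne9 : k ≠ 9 := by rintro rfl; exact hknd h9
    set t := n - k with ht
    have htk : t + k = n := by omega
    rcases Nat.even_or_odd t with he | ho
    · have het : t % 2 = 0 := Nat.even_iff.mp he
      have hgen := sg_even_le het (by omega)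
      intro hc
      -- then t ≥ n - 8 and k even, but k ∉ {2,4,6,8}: contradiction
      omega
    · have hot : t % 2 = 1 := Nat.odd_iff.mp ho
      have := sg_odd hot
      omega
  omega

/-- The main computation: for a prime `p ≡ 23 (mod 120)`, `sg (6p) = (3p-1)/2`. -/
lemma sg_six_mul_prime {p : ℕ} (hp : p.Prime) (h120 : p % 120 = 23) :
    2 * sg (6 * p) + 1 = 3 * p := by
  have hp23 : 23 ≤ p := by omega
  have hp2 : p % 2 = 1 := by omega
  have hp3 : p % 3 = 2 := by omega
  have hp5 : p % 5 = 3 := by omega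
  have hp8 : p % 8 = 7 := by omega
  obtain ⟨v, hv⟩ : ∃ v, 3 * p = 2 * v + 1 := ⟨(3 * p - 1) / 2, by omega⟩
  have hsg : sg (6 * p) = v := by
    apply sg_eq_of
    · intro k hk1 hkn hknd
      have hkne : k ≠ 6 * p := by rintro rfl; exact hknd dvd_rfl
      set t := 6 * p - k with ht
      have htk : t + k = 6 * p := by omega
      rcases Nat.even_or_odd t with he | ho
      · -- even option
        have het : t % 2 = 0 := Nat.even_iff.mp he
        have hpos' : 0 < t := by omega
        intro hc
        obtain ⟨e, hedvd, heeq⟩ := sg_even_exists het hpos'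
        -- t = 3p + e with e ∣ 3p
        have hte : t = 3 * p + e := by omega
        have he3p : e ∣ 3 * p := by
          have h1 : e ∣ t - e := Nat.dvd_sub hedvd dvd_rfl
          have h2 : t - e = 3 * p := by omega
          rwa [h2] at h1
        have he0 : e ≠ 0 := by
          rintro rfl
          have := Nat.eq_zero_of_zero_dvd he3p
          omega
        -- classify e among divisors of 3p
        have hecase : e = 1 ∨ e = 3 ∨ e = p ∨ e = 3 * p := by
          by_cases h3e : (3 : ℕ) ∣ e
          · obtain ⟨f, rfl⟩ := h3e
            have hf : f ∣ p := by
              have := (mul_dvd_mul_iff_left (by norm_num : (3:ℕ) ≠ 0)).mp he3p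
              exact this
            rcases (Nat.Prime.eq_one_or_self_of_dvd hp f hf) with h | h
            · right; left; omega
            · right; right; right; omega
          · have hcop : Nat.Coprime e 3 :=
              ((Nat.Prime.coprime_iff_not_dvd (by norm_num)).mpr h3e).symm
            have hep : e ∣ p := by
              have h' : e ∣ p * 3 := by rwa [mul_comm] at he3p
              exact hcop.dvd_of_dvd_mul_right h'
            rcases Nat.Prime.eq_one_or_self_of_dvd hp e hep with h | h
            · left; exact h
            · right; right; left; exact h
        rcases hecase with heq | heq | heq | heq
        · -- e = 1 : t = 3p + 1, use the five-lemma
          have h5t : (5 : ℕ) ∣ t := by omega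
          have h3t : t % 3 = 1 := by omega
          have := sg_le_of_five het h5t h3t hpos'
          omega
        · -- e = 3 : t = 3p + 3, use the 8/9-lemma
          have h8t : (8 : ℕ) ∣ t := by omega
          have h9t : (9 : ℕ) ∣ t := by omega
          have := sg_le_of_eight_nine h8t h9t hpos'
          omega
        · -- e = p : t = 4p, k = 2p divides 6p
          exact hknd ⟨3, by omega⟩
        · -- e = 3p : t = 6p, impossible
          omega
      · -- odd option
        have hot : t % 2 = 1 := Nat.odd_iff.mp ho
        have := sg_odd hot
        intro hc
        -- then t = 3p, so k = 3p which divides 6p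
        have hk3p : k = 3 * p := by omega
        exact hknd ⟨2, by omega⟩
    · intro w hw
      refine ⟨6 * p - (2 * w + 1), by omega, by omega, ?_, ?_⟩
      · intro hdvd
        obtain ⟨q, hq⟩ := hdvd
        have hq0 : q ≠ 0 := by rintro rfl; omega
        have hq1 : q ≠ 1 := by rintro rfl; omega
        have hmul : (6 * p - (2 * w + 1)) * 2 ≤ (6 * p - (2 * w + 1)) * q :=
          Nat.mul_le_mul_left _ (by omega)
        omega
      · have hrw : 6 * p - (6 * p - (2 * w + 1)) = 2 * w + 1 := by omega
        rw [hrw]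
        have := sg_odd (n := 2 * w + 1) (by omega)
        omega
  omega

theorem saliquant_infinitely_many_lower_bound_attained :
    {n : ℕ | 0 < n ∧ 4 * sg n + 2 = n}.Infinite := by
  have ha : IsUnit (23 : ZMod 120) :=
    IsUnit.of_mul_eq_one (a := (23 : ZMod 120)) (47 : ZMod 120) (by decide)
  have hinf : {p : ℕ | p.Prime ∧ (p : ZMod 120) = 23}.Infinite :=
    Nat.infinite_setOfPred_prime_and_eq_mod ha
  have himg : ((fun p => 6 * p) '' {p : ℕ | p.Prime ∧ (p : ZMod 120) = 23}).Infinite :=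
    hinf.image (fun a _ b _ h => by omega)
  apply himg.mono
  rintro n ⟨p, ⟨hp, hmod⟩, hn⟩
  have hn' : 6 * p = n := hn
  subst hn'
  have hmod' : p % 120 = 23 := by
    have h1 : ((p : ℕ) : ZMod 120) = ((23 : ℕ) : ZMod 120) := by
      rw [hmod]; norm_num
    have h2 := (ZMod.natCast_eq_natCast_iff p 23 120).mp h1
    unfold Nat.ModEq at h2
    omega
  have hmain := sg_six_mul_prime hp hmod'
  have hp23 : 23 ≤ p := by omega
  exact ⟨by omega, by omega⟩
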